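/- arXiv:2310.19988 — 2 statements merged into one kernel-verified Lean document; each statement's English description precedes it below -/
import Mathlib

section
/- Fix y, s ∈ {0,1} and a ∈ 𝒜 with P(Y⁰=y, S=s) > 0 and P(A=a, Y⁰=y) > 0, and assume: consistency (P-almost surely, if D = 0 then Y = Y⁰); Y⁰ is conditionally independent of (A, D) given (X, S) (for all y', d, a', x, s' with P(X=x, S=s') > 0, P(Y⁰=y', A=a', D=d | X=x, S=s') = P(Y⁰=y' | X=x, S=s') · P(A=a', D=d | X=x, S=s')); Y⁰ is conditionally independent of (A, D) given X (for all y', d, a', x with P(X=x) > 0, P(Y⁰=y', A=a', D=d | X=x) = P(Y⁰=y' | X=x) · P(A=a', D=d | X=x)); positivity given (X,S) (P(D=0, S=s', X=x) > 0 whenever P(S=s', X=x) > 0); and positivity given X (P(D=0, X=x) > 0 whenever P(X=x) > 0). Then the conditional-probability ratio appearing in the factored counterfactual error rates is identified from observed data as: P(A=a | Y⁰=y, S=s) / P(A=a | Y⁰=y) = ( E[μ₀(y,s,X) · 1{A=a} · 1{S=s}] / E[μ₀(y,s,X) · 1{S=s}] ) / ( E[μ₀*(y,X) · h(X,a)] /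 E[μ₀*(y,X)] ). -/
open MeasureTheory

/-- `pr P E` is the probability of the event `E` as a real number. -/
noncomputable def pr {Ω : Type*} [MeasurableSpace Ω] (P : Measure Ω) (E : Set Ω) : ℝ :=
  (P E).toReal

/-- `cpr P E F = P(E | F) = P(E ∩ F) / P(F)`, the conditional probability of `E` given `F`. -/
noncomputable def cpr {Ω : Type*} [MeasurableSpace Ω] (P : Measure Ω) (E F : Set Ω) : ℝ :=
  pr P (E ∩ F) / pr P F

/-!
On each stratum `F` (`X = x, S = s` or `X = x`), marginalising the conditional independence of
`Y⁰` and `(A, D)` shows that `{Y⁰ = y}` is independent of `{D = 0}` and of `{A = a}` given `F`.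
With positivity and consistency this gives `P(Y = y | D = 0, F) = P(Y⁰ = y | F)`, so every summand
is a joint probability `P(Y⁰ = y, …, F)`, and summing over the strata leaves exactly the
probabilities `P(A = a, Y⁰ = y, S = s)`, `P(Y⁰ = y, S = s)`, `P(A = a, Y⁰ = y)`, `P(Y⁰ = y)`
of which the left-hand side is made.
-/

section Events

variable {Ω : Type*} [MeasurableSpace Ω] {P : Measure Ω}

theorem cpr_congr_ae {E E' F : Set Ω} (h : ∀ᵐ ω ∂P, ω ∈ F → (ω ∈ E ↔ ω ∈ E')) :
    cpr P E F = cpr P E' F := by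
  have hEF : (E ∩ F : Set Ω) =ᵐ[P] (E' ∩ F : Set Ω) := by
    filter_upwards [h] with ω hω
    exact propext ⟨fun h => ⟨(hω h.2).1 h.1, h.2⟩, fun h => ⟨(hω h.2).2 h.1, h.2⟩⟩
  simp only [cpr, pr, measure_congr hEF]

theorem pr_nonneg (E : Set Ω) : 0 ≤ pr P E := ENNReal.toReal_nonneg

variable [IsFiniteMeasure P]

theorem pr_inter_eq_zero {F : Set Ω} (hF : pr P F = 0) (E : Set Ω) : pr P (E ∩ F) = 0 :=
  le_antisymm (hF ▸ ENNReal.toReal_mono (measure_ne_top P F) (measure_mono Set.inter_subset_right))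
    (pr_nonneg _)

theorem cpr_mul_pr (E F : Set Ω) : cpr P E F * pr P F = pr P (E ∩ F) := by
  rcases eq_or_ne (pr P F) 0 with hF | hF
  · rw [hF, mul_zero, pr_inter_eq_zero hF]
  · exact div_mul_cancel₀ _ hF

theorem cpr_mul_pr_inter_of_indep {E G F : Set Ω}
    (h : cpr P (E ∩ G) F = cpr P E F * cpr P G F) :
    cpr P E F * pr P (G ∩ F) = pr P ((E ∩ G) ∩ F) := by
  rw [← cpr_mul_pr G, ← mul_assoc, ← h, cpr_mul_pr]

theorem cpr_inter_eq_of_indep {E G F : Set Ω}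
    (h : cpr P (E ∩ G) F = cpr P E F * cpr P G F) (hG : pr P (G ∩ F) ≠ 0) :
    cpr P E (G ∩ F) = cpr P E F := by
  rw [cpr, ← Set.inter_assoc, ← cpr_mul_pr_inter_of_indep h, mul_div_cancel_right₀ _ hG]

variable {β : Type*} [MeasurableSpace β] [MeasurableSingletonClass β] [Countable β]

theorem tsum_pr_inter_fiber {f : Ω → β} (hf : Measurable f) (E : Set Ω) :
    ∑' b, pr P (E ∩ {ω | f ω = b}) = pr P E := by
  have hfib : ∀ b, MeasurableSet {ω | f ω = b} := fun b => hf (measurableSet_singleton b)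
  have hdisj : Pairwise (Function.onFun Disjoint fun b => {ω | f ω = b}) :=
    fun b b' hbb' => Set.disjoint_left.2 fun ω hb hb' => hbb' (hb.symm.trans hb')
  simp only [pr, Set.inter_comm E, ← Measure.restrict_apply (hfib _)]
  rw [← ENNReal.tsum_toReal_eq fun _ => measure_ne_top _ _, ← measure_iUnion hdisj hfib,
    Set.iUnion_eq_univ_iff.2 fun ω => ⟨f ω, rfl⟩, Measure.restrict_apply_univ]

theorem tsum_cpr_inter_fiber {f : Ω → β} (hf : Measurable f) (G F : Set Ω) :
    ∑' b, cpr P (G ∩ {ω | f ω = b}) F = cpr P G F := by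
  simp only [cpr, Set.inter_right_comm _ _ F]
  rw [tsum_div_const, tsum_pr_inter_fiber hf]

theorem cpr_inter_eq_mul_of_forall_fiber {f : Ω → β} (hf : Measurable f) {E G F : Set Ω}
    (h : ∀ b, cpr P (E ∩ (G ∩ {ω | f ω = b})) F = cpr P E F * cpr P (G ∩ {ω | f ω = b}) F) :
    cpr P (E ∩ G) F = cpr P E F * cpr P G F := by
  rw [← tsum_cpr_inter_fiber hf G, ← tsum_cpr_inter_fiber hf (E ∩ G), ← tsum_mul_left]
  exact tsum_congr fun b => by rw [← h b, Set.inter_assoc]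

end Events

section PotentialOutcomes

variable {Ω 𝒜 : Type*} [MeasurableSpace Ω] {P : Measure Ω} [IsFiniteMeasure P]
  {Y0 Y D : Ω → Bool} {A : Ω → 𝒜} {y : Bool} {F : Set Ω}

theorem cpr_potential_inter_treatment
    [MeasurableSpace 𝒜] [MeasurableSingletonClass 𝒜] [Countable 𝒜] (hA : Measurable A)
    (hCI : ∀ (d : Bool) (a' : 𝒜), cpr P {ω | Y0 ω = y ∧ A ω = a' ∧ D ω = d} F =
      cpr P {ω | Y0 ω = y} F * cpr P {ω | A ω = a' ∧ D ω = d} F) (d : Bool) :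
    cpr P ({ω | Y0 ω = y} ∩ {ω | D ω = d}) F =
      cpr P {ω | Y0 ω = y} F * cpr P {ω | D ω = d} F := by
  refine cpr_inter_eq_mul_of_forall_fiber hA fun a' => ?_
  rw [Set.inter_comm {ω | D ω = d}]
  exact hCI d a'

theorem cpr_potential_inter_group (hD : Measurable D)
    (hCI : ∀ (d : Bool) (a' : 𝒜), cpr P {ω | Y0 ω = y ∧ A ω = a' ∧ D ω = d} F =
      cpr P {ω | Y0 ω = y} F * cpr P {ω | A ω = a' ∧ D ω = d} F) (a : 𝒜) :
    cpr P ({ω | Y0 ω = y} ∩ {ω | A ω = a}) F =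
      cpr P {ω | Y0 ω = y} F * cpr P {ω | A ω = a} F :=
  cpr_inter_eq_mul_of_forall_fiber hD fun d => hCI d a

theorem cpr_observed_eq_cpr_potential
    [MeasurableSpace 𝒜] [MeasurableSingletonClass 𝒜] [Countable 𝒜] (hA : Measurable A)
    (hcons : ∀ᵐ ω ∂P, D ω = false → Y ω = Y0 ω)
    (hCI : ∀ (d : Bool) (a' : 𝒜), cpr P {ω | Y0 ω = y ∧ A ω = a' ∧ D ω = d} F =
      cpr P {ω | Y0 ω = y} F * cpr P {ω | A ω = a' ∧ D ω = d} F)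
    (hpos : 0 < pr P ({ω | D ω = false} ∩ F)) :
    cpr P {ω | Y ω = y} ({ω | D ω = false} ∩ F) = cpr P {ω | Y0 ω = y} F := by
  have hYY0 : ∀ᵐ ω ∂P, ω ∈ {ω | D ω = false} ∩ F →
      (ω ∈ {ω | Y ω = y} ↔ ω ∈ {ω | Y0 ω = y}) := by
    filter_upwards [hcons] with ω hω hωF
    show Y ω = y ↔ Y0 ω = y
    rw [hω hωF.1]
  rw [cpr_congr_ae hYY0]
  exact cpr_inter_eq_of_indep (cpr_potential_inter_treatment hA hCI false) hpos.ne'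

theorem cpr_observed_mul_pr
    [MeasurableSpace 𝒜] [MeasurableSingletonClass 𝒜] [Countable 𝒜] (hA : Measurable A)
    (hD : Measurable D)
    (hcons : ∀ᵐ ω ∂P, D ω = false → Y ω = Y0 ω)
    (hCI : 0 < pr P F → ∀ (d : Bool) (a' : 𝒜), cpr P {ω | Y0 ω = y ∧ A ω = a' ∧ D ω = d} F =
      cpr P {ω | Y0 ω = y} F * cpr P {ω | A ω = a' ∧ D ω = d} F)
    (hpos : 0 < pr P F → 0 < pr P ({ω | D ω = false} ∩ F)) (a : 𝒜) :
    cpr P {ω | Y ω = y} ({ω | D ω = false} ∩ F) * pr P ({ω | A ω = a} ∩ F) =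
      pr P (({ω | A ω = a} ∩ {ω | Y0 ω = y}) ∩ F) := by
  rcases (pr_nonneg F).lt_or_eq with hF | hF
  · rw [cpr_observed_eq_cpr_potential hA hcons (hCI hF) (hpos hF),
      Set.inter_comm {ω | A ω = a} {ω | Y0 ω = y}]
    exact cpr_mul_pr_inter_of_indep (cpr_potential_inter_group hD (hCI hF) a)
  · rw [pr_inter_eq_zero hF.symm, pr_inter_eq_zero hF.symm, mul_zero]

theorem cpr_observed_mul_pr_stratum
    [MeasurableSpace 𝒜] [MeasurableSingletonClass 𝒜] [Countable 𝒜] (hA : Measurable A)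
    (hcons : ∀ᵐ ω ∂P, D ω = false → Y ω = Y0 ω)
    (hCI : 0 < pr P F → ∀ (d : Bool) (a' : 𝒜), cpr P {ω | Y0 ω = y ∧ A ω = a' ∧ D ω = d} F =
      cpr P {ω | Y0 ω = y} F * cpr P {ω | A ω = a' ∧ D ω = d} F)
    (hpos : 0 < pr P F → 0 < pr P ({ω | D ω = false} ∩ F)) :
    cpr P {ω | Y ω = y} ({ω | D ω = false} ∩ F) * pr P F = pr P ({ω | Y0 ω = y} ∩ F) := by
  rcases (pr_nonneg F).lt_or_eq with hF | hF
  · rw [cpr_observed_eq_cpr_potential hA hcons (hCI hF) (hpos hF), cpr_mul_pr]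
  · rw [← hF, pr_inter_eq_zero hF.symm, mul_zero]

end PotentialOutcomes

theorem stmt_9_general
    {Ω 𝒜 𝒳 : Type*} [MeasurableSpace Ω]
    [MeasurableSpace 𝒜] [MeasurableSingletonClass 𝒜] [Countable 𝒜]
    [MeasurableSpace 𝒳] [MeasurableSingletonClass 𝒳] [Countable 𝒳]
    (P : Measure Ω) [IsProbabilityMeasure P]
    (Y0 Y D S : Ω → Bool) (A : Ω → 𝒜) (X : Ω → 𝒳)
    (hD : Measurable D) (hA : Measurable A) (hX : Measurable X)
    (y s : Bool) (a : 𝒜)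
    (hcons : ∀ᵐ ω ∂P, D ω = false → Y ω = Y0 ω)
    (hCIS : ∀ (y' d : Bool) (a' : 𝒜) (x : 𝒳) (s' : Bool),
      0 < pr P {ω | X ω = x ∧ S ω = s'} →
      cpr P {ω | Y0 ω = y' ∧ A ω = a' ∧ D ω = d} {ω | X ω = x ∧ S ω = s'} =
        cpr P {ω | Y0 ω = y'} {ω | X ω = x ∧ S ω = s'} *
          cpr P {ω | A ω = a' ∧ D ω = d} {ω | X ω = x ∧ S ω = s'})
    (hCIX : ∀ (y' d : Bool) (a' : 𝒜) (x : 𝒳), 0 < pr P {ω | X ω = x} →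
      cpr P {ω | Y0 ω = y' ∧ A ω = a' ∧ D ω = d} {ω | X ω = x} =
        cpr P {ω | Y0 ω = y'} {ω | X ω = x} *
          cpr P {ω | A ω = a' ∧ D ω = d} {ω | X ω = x})
    (hposDS : ∀ (s' : Bool) (x : 𝒳), 0 < pr P {ω | S ω = s' ∧ X ω = x} →
      0 < pr P {ω | D ω = false ∧ S ω = s' ∧ X ω = x})
    (hposDX : ∀ x : 𝒳, 0 < pr P {ω | X ω = x} →
      0 < pr P {ω | D ω = false ∧ X ω = x}) :
    cpr P {ω | A ω = a} {ω | Y0 ω = y ∧ S ω = s} / cpr P {ω | A ω = a} {ω | Y0 ω = y} =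
      ((∑' x : 𝒳,
          cpr P {ω | Y ω = y} {ω | D ω = false ∧ S ω = s ∧ X ω = x} *
            pr P {ω | A ω = a ∧ S ω = s ∧ X ω = x}) /
        (∑' x : 𝒳,
            cpr P {ω | Y ω = y} {ω | D ω = false ∧ S ω = s ∧ X ω = x} *
              pr P {ω | S ω = s ∧ X ω = x})) /
      ((∑' x : 𝒳,
          cpr P {ω | Y ω = y} {ω | D ω = false ∧ X ω = x} *
            cpr P {ω | A ω = a} {ω | X ω = x} * pr P {ω | X ω = x}) /
        (∑' x : 𝒳,
            cpr P {ω | Y ω = y} {ω | D ω = false ∧ X ω = x} * pr P {ω | X ω = x})) := by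
  have hCIS' : ∀ x, 0 < pr P {ω | S ω = s ∧ X ω = x} → ∀ (d : Bool) (a' : 𝒜),
      cpr P {ω | Y0 ω = y ∧ A ω = a' ∧ D ω = d} {ω | S ω = s ∧ X ω = x} =
        cpr P {ω | Y0 ω = y} {ω | S ω = s ∧ X ω = x} *
          cpr P {ω | A ω = a' ∧ D ω = d} {ω | S ω = s ∧ X ω = x} := fun x => by
    rw [show {ω | S ω = s ∧ X ω = x} = {ω | X ω = x ∧ S ω = s} from Set.ext fun _ => and_comm]
    exact fun hx d a' => hCIS y d a' x s hx
  have hAYS : ∀ x, cpr P {ω | Y ω = y} {ω | D ω = false ∧ S ω = s ∧ X ω = x} *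
      pr P {ω | A ω = a ∧ S ω = s ∧ X ω = x} =
        pr P (({ω | A ω = a} ∩ {ω | Y0 ω = y ∧ S ω = s}) ∩ {ω | X ω = x}) :=
    fun x => (cpr_observed_mul_pr hA hD hcons (hCIS' x) (hposDS s x) a).trans
      (congrArg (pr P) (Set.ext fun _ => by
        simp only [Set.mem_inter_iff, Set.mem_ofPred_eq, and_assoc]))
  have hYS : ∀ x, cpr P {ω | Y ω = y} {ω | D ω = false ∧ S ω = s ∧ X ω = x} *
      pr P {ω | S ω = s ∧ X ω = x} = pr P ({ω | Y0 ω = y ∧ S ω = s} ∩ {ω | X ω = x}) :=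
    fun x => (cpr_observed_mul_pr_stratum hA hcons (hCIS' x) (hposDS s x)).trans
      (congrArg (pr P) (Set.ext fun _ => and_assoc.symm))
  have hAY : ∀ x, cpr P {ω | Y ω = y} {ω | D ω = false ∧ X ω = x} *
      cpr P {ω | A ω = a} {ω | X ω = x} * pr P {ω | X ω = x} =
        pr P (({ω | A ω = a} ∩ {ω | Y0 ω = y}) ∩ {ω | X ω = x}) := fun x => by
    rw [mul_assoc, cpr_mul_pr]
    exact cpr_observed_mul_pr hA hD hcons (fun hx d a' => hCIX y d a' x hx) (hposDX x) a
  have hY0 : ∀ x, cpr P {ω | Y ω = y} {ω | D ω = false ∧ X ω = x} * pr P {ω | X ω = x} =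
      pr P ({ω | Y0 ω = y} ∩ {ω | X ω = x}) :=
    fun x => cpr_observed_mul_pr_stratum hA hcons (fun hx d a' => hCIX y d a' x hx) (hposDX x)
  simp only [hAYS, hYS, hAY, hY0, tsum_pr_inter_fiber hX]
  rfl

/-- under consistency, conditional independence of `Y⁰` and `(A, D)` given `(X, S)`
and given `X`, and positivity given `(X, S)` and given `X`, the conditional-probability ratio
appearing in the factored counterfactual error rates is identified from observed data:
`P(A=a | Y⁰=y, S=s) / P(A=a | Y⁰=y) =
  (E[μ₀(y,s,X)·1{A=a}·1{S=s}] / E[μ₀(y,s,X)·1{S=s}]) / (E[μ₀*(y,X)·h(X,a)] / E[μ₀*(y,X)])`,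
where `μ₀(y,s,x) = P(Y=y | D=0, S=s, X=x)`, `μ₀*(y,x) = P(Y=y | D=0, X=x)`, and
`h(x,a) = P(A=a | X=x)`.
Binary variables are modelled as `Bool`-valued, with `1 = true` and `0 = false`. -/
theorem stmt_9
    {Ω 𝒜 𝒳 : Type*} [MeasurableSpace Ω]
    [MeasurableSpace 𝒜] [MeasurableSingletonClass 𝒜] [Countable 𝒜] [Nonempty 𝒜]
    [MeasurableSpace 𝒳] [MeasurableSingletonClass 𝒳] [Countable 𝒳] [Nonempty 𝒳]
    (P : Measure Ω) [IsProbabilityMeasure P]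
    (Y0 Y D S : Ω → Bool) (A : Ω → 𝒜) (X : Ω → 𝒳)
    (hY0 : Measurable Y0) (hY : Measurable Y) (hD : Measurable D) (hS : Measurable S)
    (hA : Measurable A) (hX : Measurable X)
    (y s : Bool) (a : 𝒜)
    (hpos1 : 0 < pr P {ω | Y0 ω = y ∧ S ω = s})
    (hpos2 : 0 < pr P {ω | A ω = a ∧ Y0 ω = y})
    (hcons : ∀ᵐ ω ∂P, D ω = false → Y ω = Y0 ω)
    (hCIS : ∀ (y' d : Bool) (a' : 𝒜) (x : 𝒳) (s' : Bool),
      0 < pr P {ω | X ω = x ∧ S ω = s'} →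
      cpr P {ω | Y0 ω = y' ∧ A ω = a' ∧ D ω = d} {ω | X ω = x ∧ S ω = s'} =
        cpr P {ω | Y0 ω = y'} {ω | X ω = x ∧ S ω = s'} *
          cpr P {ω | A ω = a' ∧ D ω = d} {ω | X ω = x ∧ S ω = s'})
    (hCIX : ∀ (y' d : Bool) (a' : 𝒜) (x : 𝒳), 0 < pr P {ω | X ω = x} →
      cpr P {ω | Y0 ω = y' ∧ A ω = a' ∧ D ω = d} {ω | X ω = x} =
        cpr P {ω | Y0 ω = y'} {ω | X ω = x} *
          cpr P {ω | A ω = a' ∧ D ω = d} {ω | X ω = x})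
    (hposDS : ∀ (s' : Bool) (x : 𝒳), 0 < pr P {ω | S ω = s' ∧ X ω = x} →
      0 < pr P {ω | D ω = false ∧ S ω = s' ∧ X ω = x})
    (hposDX : ∀ x : 𝒳, 0 < pr P {ω | X ω = x} →
      0 < pr P {ω | D ω = false ∧ X ω = x}) :
    cpr P {ω | A ω = a} {ω | Y0 ω = y ∧ S ω = s} / cpr P {ω | A ω = a} {ω | Y0 ω = y} =
      ((∑' x : 𝒳,
          cpr P {ω | Y ω = y} {ω | D ω = false ∧ S ω = s ∧ X ω = x} *
            pr P {ω | A ω = a ∧ S ω = s ∧ X ω = x}) /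
        (∑' x : 𝒳,
            cpr P {ω | Y ω = y} {ω | D ω = false ∧ S ω = s ∧ X ω = x} *
              pr P {ω | S ω = s ∧ X ω = x})) /
      ((∑' x : 𝒳,
          cpr P {ω | Y ω = y} {ω | D ω = false ∧ X ω = x} *
            cpr P {ω | A ω = a} {ω | X ω = x} * pr P {ω | X ω = x}) /
        (∑' x : 𝒳,
            cpr P {ω | Y ω = y} {ω | D ω = false ∧ X ω = x} * pr P {ω | X ω = x})) :=
  stmt_9_general P Y0 Y D S A X hD hA hX y s a hcons hCIS hCIX hposDS hposDX
end

section
/- Fix a ∈ 𝒜 with P(Y⁰=1, A=a) > 0, and assume consistency (P-almost surely, if D = 0 then Y = Y⁰), ignorability (for all a' ∈ 𝒜, x ∈ 𝒳, and s, y, d ∈ {0,1} with P(A=a', X=x, S=s) > 0, P(Y⁰=y, D=d | A=a', X=x, S=s) = P(Y⁰=y | A=a', X=x, S=s) · P(D=d | A=a', X=x, S=s)), and positivity (P(D=0, A=a', X=x, S=s) > 0 whenever P(A=a', X=x, S=s) > 0). Then the group-specific counterfactual false negative rate is identified by the group-restricted inverse-probability-weighted ratio: P(S=0 | Y⁰=1,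 A=a) = E[ 1{D=0} · 1{S=0} · 1{Y=1} · 1{A=a} / (1 − π(A,X,S)) ] / E[ 1{D=0} · 1{Y=1} · 1{A=a} / (1 − π(A,X,S)) ], where the denominator is strictly positive since it equals P(Y⁰=1, A=a). -/
/-!
Within a stratum `C = {A = a, X = x, S = s}`, consistency identifies `P(D = 0, Y = 1, C)` with
`P(Y⁰ = 1, D = 0, C)`, and ignorability factors the latter as `P(Y⁰ = 1, C) · P(D = 0 | C)`.
Dividing by `1 - π(a, x, s) = P(D = 0 | C)`, which is nonzero by positivity, leaves
`P(Y⁰ = 1, C)`, and summing over the strata gives `P(Y⁰ = 1, A = a)`. Since `S` is constant on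
each stratum, the extra factor `1{S = 0}` only discards strata, so the numerator sums to
`P(S = 0, Y⁰ = 1, A = a)`.
-/

open MeasureTheory

section

variable {Ω : Type*} [MeasurableSpace Ω] (P : Measure Ω)

theorem pr_congr_ae {E F : Set Ω} (h : ∀ᵐ ω ∂P, ω ∈ E ↔ ω ∈ F) : pr P E = pr P F :=
  measureReal_congr (Filter.eventuallyEq_set.2 h)

variable [IsFiniteMeasure P]

theorem pr_mono {E F : Set Ω} (h : E ⊆ F) : pr P E ≤ pr P F :=
  measureReal_mono h

theorem pr_eq_tsum_pr_inter_fiber {ι : Type*} [MeasurableSpace ι] [MeasurableSingletonClass ι]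
    [Countable ι] {E : Set Ω} (hE : MeasurableSet E) {f : Ω → ι} (hf : Measurable f) :
    pr P E = ∑' i, pr P (E ∩ f ⁻¹' {i}) := by
  have hcover : E = ⋃ i, E ∩ f ⁻¹' {i} := by
    ext ω
    simp
  have hdisj : Pairwise (Function.onFun Disjoint fun i => E ∩ f ⁻¹' {i}) := fun i j hij =>
    ((pairwise_disjoint_fiber f) hij).mono Set.inter_subset_right Set.inter_subset_right
  conv_lhs =>
    rw [pr, hcover, measure_iUnion hdisj fun i => hE.inter (hf (measurableSet_singleton i))]
  exact ENNReal.tsum_toReal_eq fun i => measure_ne_top P _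

theorem pr_eq_zero_of_subset {E F : Set Ω} (h : E ⊆ F) (hF : pr P F = 0) : pr P E = 0 :=
  measureReal_mono_null h hF

theorem pr_setOf_eq_tsum_tsum {ι κ : Type*} [MeasurableSpace ι] [MeasurableSingletonClass ι]
    [Countable ι] [MeasurableSpace κ] [MeasurableSingletonClass κ] [Countable κ] {p : Ω → Prop}
    (hp : MeasurableSet {ω | p ω}) {f : Ω → ι} (hf : Measurable f) {g : Ω → κ}
    (hg : Measurable g) :
    pr P {ω | p ω} = ∑' (i : ι) (j : κ), pr P {ω | p ω ∧ f ω = i ∧ g ω = j} := by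
  rw [pr_eq_tsum_pr_inter_fiber P hp hf]
  refine tsum_congr fun i => ?_
  rw [pr_eq_tsum_pr_inter_fiber P (hp.inter (hf (measurableSet_singleton i))) hg]
  simp only [Set.inter_assoc]
  rfl

theorem one_sub_cpr_compl {F C : Set Ω} (hF : MeasurableSet F) (hC : pr P C ≠ 0) :
    1 - cpr P Fᶜ C = cpr P F C := by
  have hsplit : pr P (C ∩ F) + pr P (C \ F) = pr P C := measureReal_inter_add_sdiff hF
  rw [cpr, cpr, ← Set.sdiff_eq_compl_inter, Set.inter_comm]
  field_simp
  linarith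

theorem pr_inter_div_cpr_of_condIndep {E F C : Set Ω}
    (hind : cpr P (E ∩ F) C = cpr P E C * cpr P F C) (hF : 0 < pr P (F ∩ C)) :
    pr P (E ∩ F ∩ C) / cpr P F C = pr P (E ∩ C) := by
  have hC : pr P C ≠ 0 := (hF.trans_le (pr_mono P Set.inter_subset_right)).ne'
  have hFC : pr P (F ∩ C) ≠ 0 := hF.ne'
  unfold cpr at hind ⊢
  field_simp at hind ⊢
  linear_combination hind

theorem pr_inter_div_one_sub_cpr_compl {E F C : Set Ω} (hF : MeasurableSet F)
    (hind : 0 < pr P C → cpr P (E ∩ F) C = cpr P E C * cpr P F C)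
    (hpos : 0 < pr P C → 0 < pr P (F ∩ C)) :
    pr P (E ∩ F ∩ C) / (1 - cpr P Fᶜ C) = pr P (E ∩ C) := by
  rcases measureReal_nonneg.eq_or_lt with hC | hC
  -- on a null stratum `cpr P Fᶜ C = 0 / 0 = 0`, but both sides vanish
  · rw [pr_eq_zero_of_subset P Set.inter_subset_right hC.symm,
      pr_eq_zero_of_subset P Set.inter_subset_right hC.symm, zero_div]
  · rw [one_sub_cpr_compl P hF hC.ne']
    exact pr_inter_div_cpr_of_condIndep P (hind hC) (hpos hC)

theorem ipw_stratum_eq_pr_potentialOutcome {Y0 Y D : Ω → Bool} (hD : Measurable D)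
    (hcons : ∀ᵐ ω ∂P, D ω = false → Y ω = Y0 ω) {c : Ω → Prop}
    (hig : 0 < pr P {ω | c ω} →
      cpr P {ω | Y0 ω = true ∧ D ω = false} {ω | c ω} =
        cpr P {ω | Y0 ω = true} {ω | c ω} * cpr P {ω | D ω = false} {ω | c ω})
    (hposD : 0 < pr P {ω | c ω} → 0 < pr P {ω | D ω = false ∧ c ω}) :
    pr P {ω | D ω = false ∧ Y ω = true ∧ c ω} / (1 - cpr P {ω | D ω = true} {ω | c ω}) =
      pr P {ω | Y0 ω = true ∧ c ω} := by
  have hobs : pr P {ω | D ω = false ∧ Y ω = true ∧ c ω} =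
      pr P ({ω | Y0 ω = true} ∩ {ω | D ω = false} ∩ {ω | c ω}) := by
    refine pr_congr_ae P ?_
    filter_upwards [hcons] with ω hω
    simp only [Set.mem_inter_iff, Set.mem_ofPred_eq]
    constructor
    · rintro ⟨hd, hy, hc⟩
      exact ⟨⟨hω hd ▸ hy, hd⟩, hc⟩
    · rintro ⟨⟨hy, hd⟩, hc⟩
      exact ⟨hd, (hω hd).symm ▸ hy, hc⟩
  have htreated : {ω | D ω = true} = {ω | D ω = false}ᶜ := by ext; simp
  rw [hobs, htreated]
  exact pr_inter_div_one_sub_cpr_compl P (hD (measurableSet_singleton false)) hig hposD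

end

theorem stmt_15_general
    {Ω 𝒜 𝒳 : Type*} [MeasurableSpace Ω]
    [MeasurableSpace 𝒜] [MeasurableSingletonClass 𝒜]
    [MeasurableSpace 𝒳] [MeasurableSingletonClass 𝒳] [Countable 𝒳]
    (P : Measure Ω) [IsProbabilityMeasure P]
    (Y0 Y D S : Ω → Bool) (A : Ω → 𝒜) (X : Ω → 𝒳)
    (hY0 : Measurable Y0) (hD : Measurable D) (hS : Measurable S)
    (hA : Measurable A) (hX : Measurable X)
    (a : 𝒜)
    (hpos : 0 < pr P {ω | Y0 ω = true ∧ A ω = a})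
    (hcons : ∀ᵐ ω ∂P, D ω = false → Y ω = Y0 ω)
    (hig : ∀ (a' : 𝒜) (x : 𝒳) (s y d : Bool),
      0 < pr P {ω | A ω = a' ∧ X ω = x ∧ S ω = s} →
      cpr P {ω | Y0 ω = y ∧ D ω = d} {ω | A ω = a' ∧ X ω = x ∧ S ω = s} =
        cpr P {ω | Y0 ω = y} {ω | A ω = a' ∧ X ω = x ∧ S ω = s} *
          cpr P {ω | D ω = d} {ω | A ω = a' ∧ X ω = x ∧ S ω = s})
    (hposD : ∀ (a' : 𝒜) (x : 𝒳) (s : Bool),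
      0 < pr P {ω | A ω = a' ∧ X ω = x ∧ S ω = s} →
      0 < pr P {ω | D ω = false ∧ A ω = a' ∧ X ω = x ∧ S ω = s}) :
    0 < (∑' (x : 𝒳) (s : Bool),
          pr P {ω | D ω = false ∧ Y ω = true ∧ A ω = a ∧ X ω = x ∧ S ω = s} /
            (1 - cpr P {ω | D ω = true} {ω | A ω = a ∧ X ω = x ∧ S ω = s})) ∧
    (∑' (x : 𝒳) (s : Bool),
        pr P {ω | D ω = false ∧ Y ω = true ∧ A ω = a ∧ X ω = x ∧ S ω = s} /
          (1 - cpr P {ω | D ω = true} {ω | A ω = a ∧ X ω = x ∧ S ω = s})) =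
      pr P {ω | Y0 ω = true ∧ A ω = a} ∧
    cpr P {ω | S ω = false} {ω | Y0 ω = true ∧ A ω = a} =
      (∑' (x : 𝒳) (s : Bool),
          pr P {ω | D ω = false ∧ S ω = false ∧ Y ω = true ∧ A ω = a ∧ X ω = x ∧ S ω = s} /
            (1 - cpr P {ω | D ω = true} {ω | A ω = a ∧ X ω = x ∧ S ω = s})) /
        (∑' (x : 𝒳) (s : Bool),
            pr P {ω | D ω = false ∧ Y ω = true ∧ A ω = a ∧ X ω = x ∧ S ω = s} /
              (1 - cpr P {ω | D ω = true} {ω | A ω = a ∧ X ω = x ∧ S ω = s})) := by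
  have cell (x : 𝒳) (s : Bool) :
      pr P {ω | D ω = false ∧ Y ω = true ∧ A ω = a ∧ X ω = x ∧ S ω = s} /
        (1 - cpr P {ω | D ω = true} {ω | A ω = a ∧ X ω = x ∧ S ω = s}) =
      pr P {ω | Y0 ω = true ∧ A ω = a ∧ X ω = x ∧ S ω = s} :=
    ipw_stratum_eq_pr_potentialOutcome P hD hcons (hig a x s true false) (hposD a x s)
  have cell_S : ∀ (x : 𝒳) (s : Bool),
      pr P {ω | D ω = false ∧ S ω = false ∧ Y ω = true ∧ A ω = a ∧ X ω = x ∧ S ω = s} /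
        (1 - cpr P {ω | D ω = true} {ω | A ω = a ∧ X ω = x ∧ S ω = s}) =
      pr P {ω | S ω = false ∧ Y0 ω = true ∧ A ω = a ∧ X ω = x ∧ S ω = s} := by
    rintro x (_ | _)
    · convert cell x false using 3 <;> ext <;> simp [and_iff_right_of_imp]
    · have hnum : {ω | D ω = false ∧ S ω = false ∧ Y ω = true ∧ A ω = a ∧ X ω = x ∧
          S ω = true} = ∅ :=
        Set.eq_empty_of_forall_notMem fun ω ⟨_, h0, _, _, _, h1⟩ =>
          Bool.false_ne_true (h0.symm.trans h1)
      have hrhs : {ω | S ω = false ∧ Y0 ω = true ∧ A ω = a ∧ X ω = x ∧ S ω = true} = ∅ :=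
        Set.eq_empty_of_forall_notMem fun ω ⟨h0, _, _, _, h1⟩ =>
          Bool.false_ne_true (h0.symm.trans h1)
      simp [hnum, hrhs, pr]
  have hden : (∑' (x : 𝒳) (s : Bool),
      pr P {ω | D ω = false ∧ Y ω = true ∧ A ω = a ∧ X ω = x ∧ S ω = s} /
        (1 - cpr P {ω | D ω = true} {ω | A ω = a ∧ X ω = x ∧ S ω = s})) =
      pr P {ω | Y0 ω = true ∧ A ω = a} := by
    simp_rw [cell]
    rw [pr_setOf_eq_tsum_tsum P (by measurability) hX hS]
    simp only [and_assoc]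
  have hnum : (∑' (x : 𝒳) (s : Bool),
      pr P {ω | D ω = false ∧ S ω = false ∧ Y ω = true ∧ A ω = a ∧ X ω = x ∧ S ω = s} /
        (1 - cpr P {ω | D ω = true} {ω | A ω = a ∧ X ω = x ∧ S ω = s})) =
      pr P {ω | S ω = false ∧ Y0 ω = true ∧ A ω = a} := by
    simp_rw [cell_S]
    rw [pr_setOf_eq_tsum_tsum P (by measurability) hX hS]
    simp only [and_assoc]
  refine ⟨hden ▸ hpos, hden, ?_⟩
  rw [hnum, hden]
  rfl

/-- under consistency, ignorability, and positivity, the group-specific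
counterfactual false negative rate is identified by the group-restricted
inverse-probability-weighted ratio:
`P(S=0 | Y⁰=1, A=a) = E[1{D=0}·1{S=0}·1{Y=1}·1{A=a}/(1−π(A,X,S))] /
  E[1{D=0}·1{Y=1}·1{A=a}/(1−π(A,X,S))]`,
where `π(a,x,s) = P(D=1 | A=a, X=x, S=s)`, the expectations are series over the level sets
`(x, s)` of `(X, S)` with `A = a` fixed (the indicator `1{S=0}` is encoded by also requiring
`S ω = false` in the event), and the denominator is strictly positive since it equals
`P(Y⁰=1, A=a)`. Binary variables are modelled as `Bool`-valued, with `1 = true`, `0 = false`. -/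
theorem stmt_15
    {Ω 𝒜 𝒳 : Type*} [MeasurableSpace Ω]
    [MeasurableSpace 𝒜] [MeasurableSingletonClass 𝒜] [Countable 𝒜] [Nonempty 𝒜]
    [MeasurableSpace 𝒳] [MeasurableSingletonClass 𝒳] [Countable 𝒳] [Nonempty 𝒳]
    (P : Measure Ω) [IsProbabilityMeasure P]
    (Y0 Y D S : Ω → Bool) (A : Ω → 𝒜) (X : Ω → 𝒳)
    (hY0 : Measurable Y0) (hY : Measurable Y) (hD : Measurable D) (hS : Measurable S)
    (hA : Measurable A) (hX : Measurable X)
    (a : 𝒜)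
    (hpos : 0 < pr P {ω | Y0 ω = true ∧ A ω = a})
    (hcons : ∀ᵐ ω ∂P, D ω = false → Y ω = Y0 ω)
    (hig : ∀ (a' : 𝒜) (x : 𝒳) (s y d : Bool),
      0 < pr P {ω | A ω = a' ∧ X ω = x ∧ S ω = s} →
      cpr P {ω | Y0 ω = y ∧ D ω = d} {ω | A ω = a' ∧ X ω = x ∧ S ω = s} =
        cpr P {ω | Y0 ω = y} {ω | A ω = a' ∧ X ω = x ∧ S ω = s} *
          cpr P {ω | D ω = d} {ω | A ω = a' ∧ X ω = x ∧ S ω = s})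
    (hposD : ∀ (a' : 𝒜) (x : 𝒳) (s : Bool),
      0 < pr P {ω | A ω = a' ∧ X ω = x ∧ S ω = s} →
      0 < pr P {ω | D ω = false ∧ A ω = a' ∧ X ω = x ∧ S ω = s}) :
    0 < (∑' (x : 𝒳) (s : Bool),
          pr P {ω | D ω = false ∧ Y ω = true ∧ A ω = a ∧ X ω = x ∧ S ω = s} /
            (1 - cpr P {ω | D ω = true} {ω | A ω = a ∧ X ω = x ∧ S ω = s})) ∧
    (∑' (x : 𝒳) (s : Bool),
        pr P {ω | D ω = false ∧ Y ω = true ∧ A ω = a ∧ X ω = x ∧ S ω = s} /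
          (1 - cpr P {ω | D ω = true} {ω | A ω = a ∧ X ω = x ∧ S ω = s})) =
      pr P {ω | Y0 ω = true ∧ A ω = a} ∧
    cpr P {ω | S ω = false} {ω | Y0 ω = true ∧ A ω = a} =
      (∑' (x : 𝒳) (s : Bool),
          pr P {ω | D ω = false ∧ S ω = false ∧ Y ω = true ∧ A ω = a ∧ X ω = x ∧ S ω = s} /
            (1 - cpr P {ω | D ω = true} {ω | A ω = a ∧ X ω = x ∧ S ω = s})) /
        (∑' (x : 𝒳) (s : Bool),
            pr P {ω | D ω = false ∧ Y ω = true ∧ A ω = a ∧ X ω = x ∧ S ω = s} /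
              (1 - cpr P {ω | D ω = true} {ω | A ω = a ∧ X ω = x ∧ S ω = s})) :=
  stmt_15_general P Y0 Y D S A X hY0 hD hS hA hX a hpos hcons hig hposD
end
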